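/- The Magnus expansion E : A → ℤ⟨⟨X_1,...,X_n⟩⟩, sending each free generator α_i of the free group A of rank n to 1 + X_i, is an injective group homomorphism into the group of units of ℤ⟨⟨X_1,...,X_n⟩⟩. -/

import Mathlib

/-- The ring `ℤ⟨⟨X_i : i ∈ σ⟩⟩` of formal power series in non-commuting variables,
realized as coefficient functions on words (monomials) in the alphabet `σ`. -/
def NCSeries (σ : Type*) : Type _ := List σ → ℤ

instance {σ : Type*} : AddCommGroup (NCSeries σ) :=
  inferInstanceAs (AddCommGroup (List σ → ℤ))

instance {σ : Type*} : One (NCSeries σ) :=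
  ⟨fun w => match w with | [] => 1 | _ => 0⟩

/-- Multiplication of non-commutative power series: convolution over all
splittings of a word. -/
instance {σ : Type*} : Mul (NCSeries σ) :=
  ⟨fun f g => fun w => ∑ i ∈ Finset.range (w.length + 1), f (w.take i) * g (w.drop i)⟩

/-- The variable `X_j`, as a power series. -/
def Xvar {σ : Type*} [DecidableEq σ] (j : σ) : NCSeries σ :=
  fun w => if w = [j] then 1 else 0

/-- The Magnus expansion of a single letter: `α_i ↦ 1 + X_i` and
`α_i⁻¹ ↦ 1 - X_i + X_i² - ⋯`. -/
def letterE {σ : Type*} [DecidableEq σ] (l : σ × Bool) : NCSeries σ := fun w =>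
  if l.2 then (if w = [] ∨ w = [l.1] then (1 : ℤ) else 0)
  else (if ∀ a ∈ w, a = l.1 then ((-1) ^ w.length : ℤ) else 0)

/-- The Magnus expansion `E : FreeGroup σ → ℤ⟨⟨X_i : i ∈ σ⟩⟩`, computed as the
product of the Magnus expansions of the letters of the reduced word. -/
def magnus {σ : Type*} [DecidableEq σ] (x : FreeGroup σ) : NCSeries σ :=
  (FreeGroup.toWord x).foldr (fun l acc => letterE l * acc) 1

/-- The `q`-th term of the lower central series, indexed as in Milnor's paper:
`lcs G 1 = G`, `lcs G (q+1) = [G, lcs G q]`. -/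
def lcs (G : Type*) [Group G] (q : ℕ) : Subgroup G := Subgroup.lowerCentralSeries (⊤ : Subgroup G) (q - 1)

/-!
`1 + X_i` is a unit whose inverse `1 - X_i + X_i² - ⋯` commutes with it, as any two power
series in the single variable `X_i` do; so the Magnus expansion is `FreeGroup.lift` into the
units.

For injectivity, view the free group as the free product of the cyclic groups `⟨α_i⟩`, so
that a nontrivial element is a reduced word `α_{i_1}^{k_1} ⋯ α_{i_r}^{k_r}` with all `k_j ≠ 0`
and `i_j ≠ i_{j+1}`. We have `(1 + X_i)^k = 1 + k X_i + (terms in X_i², X_i³, …)`, and on a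
monomial with no two equal adjacent letters a series in `X_i` alone can only contribute
through its constant and linear terms. Hence the coefficient of `X_{i_1} ⋯ X_{i_r}` in the
image is `k_1 ⋯ k_r ≠ 0`, whereas it is `0` in `1`.
-/

namespace NCSeries

variable {σ : Type*}

theorem mul_apply (f g : NCSeries σ) (w : List σ) :
    (f * g) w = ∑ i ∈ Finset.range (w.length + 1), f (w.take i) * g (w.drop i) := rfl

theorem one_apply_nil : (1 : NCSeries σ) [] = 1 := rfl

theorem one_apply_cons (a : σ) (t : List σ) : (1 : NCSeries σ) (a :: t) = 0 := rfl

theorem mul_apply_nil (f g : NCSeries σ) : (f * g) [] = f [] * g [] := by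
  simp [mul_apply]

theorem mul_apply_cons (f g : NCSeries σ) (a : σ) (t : List σ) :
    (f * g) (a :: t) = f [] * g (a :: t) +
      ∑ i ∈ Finset.range (t.length + 1), f (a :: t.take i) * g (t.drop i) := by
  rw [mul_apply, List.length_cons, Finset.sum_range_succ', add_comm]
  rfl

theorem mul_apply_singleton (f g : NCSeries σ) (a : σ) :
    (f * g) [a] = f [] * g [a] + f [a] * g [] := by
  simp [mul_apply_cons]

protected theorem one_mul (f : NCSeries σ) : 1 * f = f := by
  funext w
  cases w with
  | nil => simp [mul_apply_nil, one_apply_nil]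
  | cons a t => simp [mul_apply_cons, one_apply_nil, one_apply_cons]

protected theorem mul_one (f : NCSeries σ) : f * 1 = f := by
  funext w
  rw [mul_apply, Finset.sum_range_succ, Finset.sum_eq_zero]
  · rw [List.take_length, List.drop_length, one_apply_nil, zero_add, mul_one]
  · intro j hj
    obtain ⟨a, t, ht⟩ := List.exists_cons_of_length_pos (l := w.drop j)
      (by rw [Finset.mem_range] at hj; rw [List.length_drop]; omega)
    rw [ht, one_apply_cons, mul_zero]

protected theorem mul_assoc (f g h : NCSeries σ) : f * g * h = f * (g * h) := by
  funext w
  set n := w.length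
  let T (i j : ℕ) := f (w.take i) * g ((w.drop i).take (j - i)) * h (w.drop j)
  calc (f * g * h) w
      = ∑ j ∈ Finset.range (n + 1), ∑ i ∈ Finset.range (j + 1), T i j := by
        refine Finset.sum_congr rfl fun j hj => ?_
        rw [mul_apply, Finset.sum_mul, List.length_take, min_eq_left (by simpa [n] using hj)]
        refine Finset.sum_congr rfl fun i hi => ?_
        rw [List.take_take, min_eq_left (by simpa using hi), List.drop_take]
    _ = ∑ i ∈ Finset.range (n + 1), ∑ j ∈ Finset.Ico i (n + 1), T i j :=
        Finset.sum_comm' fun j i => by simp only [Finset.mem_range, Finset.mem_Ico]; omega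
    _ = (f * (g * h)) w := by
        refine Finset.sum_congr rfl fun i hi => ?_
        rw [mul_apply, Finset.mul_sum, Finset.sum_Ico_eq_sum_range, List.length_drop,
          show n + 1 - i = n - i + 1 by rw [Finset.mem_range] at hi; omega]
        refine Finset.sum_congr rfl fun k _ => ?_
        simp only [T, Nat.add_sub_cancel_left, List.drop_drop, mul_assoc]

instance : Monoid (NCSeries σ) where
  one_mul := NCSeries.one_mul
  mul_one := NCSeries.mul_one
  mul_assoc := NCSeries.mul_assoc

def IsSeriesIn (a : σ) (f : NCSeries σ) : Prop :=
  ∀ w : List σ, ∀ x ∈ w, x ≠ a → f w = 0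

theorem IsSeriesIn.mul {a : σ} {f g : NCSeries σ} (hf : IsSeriesIn a f) (hg : IsSeriesIn a g) :
    IsSeriesIn a (f * g) := by
  intro w x hx hxa
  refine Finset.sum_eq_zero fun i _ => ?_
  rw [← List.take_append_drop i w, List.mem_append] at hx
  rcases hx with hx | hx
  · rw [hf _ x hx hxa, zero_mul]
  · rw [hg _ x hx hxa, mul_zero]

theorem IsSeriesIn.commute {a : σ} {f g : NCSeries σ} (hf : IsSeriesIn a f)
    (hg : IsSeriesIn a g) : Commute f g := by
  funext w
  by_cases hw : ∃ x ∈ w, x ≠ a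
  · obtain ⟨x, hx, hxa⟩ := hw
    rw [hf.mul hg w x hx hxa, hg.mul hf w x hx hxa]
  push Not at hw
  rw [List.eq_replicate_iff.2 ⟨rfl, hw⟩]
  simp only [mul_apply, List.length_replicate, List.take_replicate, List.drop_replicate]
  rw [← Finset.sum_range_reflect]
  refine Finset.sum_congr rfl fun j hj => ?_
  rw [Finset.mem_range] at hj
  rw [min_eq_left (by omega), min_eq_left (by omega), Nat.add_sub_cancel,
    Nat.sub_sub_self (by omega), mul_comm]

theorem isSeriesIn_one (a : σ) : IsSeriesIn a (1 : NCSeries σ) := by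
  rintro (_ | ⟨b, t⟩) x hx _
  · simp at hx
  · rfl

variable [DecidableEq σ]

theorem letterE_apply_nil (l : σ × Bool) : letterE l [] = 1 := by
  rcases l with ⟨i, _ | _⟩ <;> simp [letterE]

theorem letterE_apply_singleton (i : σ) (b : Bool) :
    letterE (i, b) [i] = if b then 1 else -1 := by
  cases b <;> simp [letterE]

theorem isSeriesIn_letterE (i : σ) (b : Bool) : IsSeriesIn i (letterE (i, b)) := by
  rintro w x hx hxl
  cases b <;> simp only [letterE, Bool.false_eq_true, if_false, if_true]
  · exact if_neg fun h => hxl (h x hx)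
  · refine if_neg ?_
    rintro (rfl | rfl)
    · simp at hx
    · exact hxl (List.mem_singleton.1 hx)

theorem letterE_false_apply_cons (i a : σ) (t : List σ) :
    letterE (i, false) (a :: t) = if a = i then -letterE (i, false) t else 0 := by
  by_cases h : a = i
  · subst h
    simp only [letterE, Bool.false_eq_true, if_false, List.forall_mem_cons, true_and,
      List.length_cons, pow_succ, mul_neg_one]
    split_ifs <;> simp
  · simp [letterE, h]

theorem letterE_true_mul_apply_cons (i a : σ) (t : List σ) (g : NCSeries σ) :
    (letterE (i, true) * g) (a :: t) = g (a :: t) + if a = i then g t else 0 := by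
  rw [mul_apply_cons, letterE_apply_nil, one_mul, Finset.sum_eq_single_of_mem 0 (by simp)]
  · by_cases h : a = i <;> simp [letterE, h]
  · intro j hj hj0
    have htake : t.take j ≠ [] := by
      simp only [Finset.mem_range] at hj
      simp only [ne_eq, List.take_eq_nil_iff, not_or]
      exact ⟨hj0, by rintro rfl; rw [List.length_nil] at hj; omega⟩
    simp [letterE, htake]

theorem letterE_true_mul_letterE_false (i : σ) : letterE (i, true) * letterE (i, false) = 1 := by
  funext w
  cases w with
  | nil => rw [mul_apply_nil, letterE_apply_nil, letterE_apply_nil, one_mul, one_apply_nil]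
  | cons a t =>
    rw [letterE_true_mul_apply_cons, letterE_false_apply_cons, one_apply_cons]
    split_ifs <;> simp

def letterUnit (i : σ) : (NCSeries σ)ˣ where
  val := letterE (i, true)
  inv := letterE (i, false)
  val_inv := letterE_true_mul_letterE_false i
  inv_val := by
    rw [((isSeriesIn_letterE i false).commute (isSeriesIn_letterE i true)).eq,
      letterE_true_mul_letterE_false]

theorem IsSeriesIn.mul_apply_cons {a c : σ} {t : List σ} {f : NCSeries σ} (hf : IsSeriesIn a f)
    (g : NCSeries σ) (hw : (c :: t).IsChain (· ≠ ·)) :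
    (f * g) (c :: t) = f [] * g (c :: t) + f [c] * g t := by
  rw [NCSeries.mul_apply_cons, Finset.sum_range_succ', List.take_zero, List.drop_zero,
    Finset.sum_eq_zero, zero_add]
  intro j hj
  obtain ⟨d, t', rfl⟩ := List.exists_cons_of_length_pos (by rw [Finset.mem_range] at hj; omega : 0 < t.length)
  have hcd : c ≠ d := (List.isChain_cons_cons.1 hw).1
  rw [List.take_succ_cons]
  by_cases hca : c = a
  · rw [hf _ d (by simp) (hca ▸ hcd.symm), zero_mul]
  · rw [hf _ c (by simp) hca, zero_mul]

section Product

variable {L : List (σ × NCSeries σ)}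

theorem prod_apply_eq_zero_of_length_lt (hL : L.IsChain (·.1 ≠ ·.1))
    (hf : ∀ p ∈ L, IsSeriesIn p.1 p.2 ∧ p.2 [] = 1) {w : List σ} (hw : w.IsChain (· ≠ ·))
    (hlen : L.length < w.length) : (L.map Prod.snd).prod w = 0 := by
  induction L generalizing w with
  | nil =>
    obtain ⟨c, t, rfl⟩ := List.exists_cons_of_length_pos hlen
    rfl
  | cons p T ih =>
    obtain ⟨c, t, rfl⟩ := List.exists_cons_of_length_pos (Nat.zero_lt_of_lt hlen)
    have hp := hf p List.mem_cons_self
    have hT : ∀ q ∈ T, IsSeriesIn q.1 q.2 ∧ q.2 [] = 1 := fun q hq => hf q (.tail p hq)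
    have hLT : T.IsChain (·.1 ≠ ·.1) := hL.tail
    have ht : t.IsChain (· ≠ ·) := hw.tail
    simp only [List.length_cons] at hlen
    rw [List.map_cons, List.prod_cons, hp.1.mul_apply_cons _ hw,
      ih hLT hT hw (by rw [List.length_cons]; omega), ih hLT hT ht (by omega), mul_zero, mul_zero, add_zero]

theorem prod_apply_map_fst (hL : L.IsChain (·.1 ≠ ·.1))
    (hf : ∀ p ∈ L, IsSeriesIn p.1 p.2 ∧ p.2 [] = 1) :
    (L.map Prod.snd).prod (L.map Prod.fst) = (L.map fun p => p.2 [p.1]).prod := by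
  induction L with
  | nil => rfl
  | cons p T ih =>
    have hp := hf p List.mem_cons_self
    have hT : ∀ q ∈ T, IsSeriesIn q.1 q.2 ∧ q.2 [] = 1 := fun q hq => hf q (.tail p hq)
    have hw : ((p :: T).map Prod.fst).IsChain (· ≠ ·) := (List.isChain_map Prod.fst).2 hL
    rw [List.map_cons] at hw
    simp only [List.map_cons, List.prod_cons]
    have hLT : T.IsChain (·.1 ≠ ·.1) := hL.tail
    rw [hp.1.mul_apply_cons _ hw, prod_apply_eq_zero_of_length_lt hLT hT hw (by simp),
      ih hLT hT, mul_zero, zero_add]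

end Product

theorem letterUnit_zpow_spec (i : σ) (k : ℤ) :
    IsSeriesIn i ↑(letterUnit i ^ k) ∧ (↑(letterUnit i ^ k) : NCSeries σ) [] = 1 ∧
      (↑(letterUnit i ^ k) : NCSeries σ) [i] = k := by
  induction k using Int.induction_on with
  | zero => exact ⟨isSeriesIn_one i, rfl, rfl⟩
  | succ k ih =>
    obtain ⟨hser, hnil, hi⟩ := ih
    rw [zpow_add_one, Units.val_mul]
    refine ⟨hser.mul (isSeriesIn_letterE i true), ?_, ?_⟩
    · rw [mul_apply_nil, hnil]; rfl
    · rw [mul_apply_singleton, hnil, hi]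
      change _ * letterE (i, true) [i] + _ * letterE (i, true) [] = _
      rw [letterE_apply_singleton, letterE_apply_nil, if_pos rfl]
      ring
  | pred k ih =>
    obtain ⟨hser, hnil, hi⟩ := ih
    rw [zpow_sub_one, Units.val_mul]
    refine ⟨hser.mul (isSeriesIn_letterE i false), ?_, ?_⟩
    · rw [mul_apply_nil, hnil]; rfl
    · rw [mul_apply_singleton, hnil, hi]
      change _ * letterE (i, false) [i] + _ * letterE (i, false) [] = _
      rw [letterE_apply_singleton, letterE_apply_nil, if_neg Bool.false_ne_true]
      ring

def magnusHom : FreeGroup σ →* (NCSeries σ)ˣ := FreeGroup.lift letterUnit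

theorem coe_magnusHom (x : FreeGroup σ) : (magnusHom x : NCSeries σ) = magnus x := by
  conv_lhs => rw [← FreeGroup.mk_toWord (x := x)]
  rw [magnus, magnusHom, FreeGroup.lift_mk, ← Units.coeHom_apply, map_list_prod, List.map_map,
    List.prod_eq_foldr, List.foldr_map]
  congr 1
  funext l acc
  rcases l with ⟨j, _ | _⟩ <;> rfl

def magnusCoprodI : Monoid.CoprodI (fun _ : σ => FreeGroup Unit) →* (NCSeries σ)ˣ :=
  Monoid.CoprodI.lift fun i => FreeGroup.lift fun _ => letterUnit i

theorem magnusCoprodI_of (i : σ) (m : FreeGroup Unit) :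
    magnusCoprodI (Monoid.CoprodI.of (i := i) m) =
      letterUnit i ^ FreeGroup.freeGroupUnitEquivInt m := by
  conv_lhs => rw [← FreeGroup.freeGroupUnitEquivInt.symm_apply_apply m]
  simp [magnusCoprodI, FreeGroup.freeGroupUnitEquivInt]

theorem coe_magnusCoprodI_prod_apply (w : Monoid.CoprodI.Word fun _ : σ => FreeGroup Unit) :
    (magnusCoprodI w.prod : NCSeries σ) (w.toList.map Sigma.fst) =
      (w.toList.map fun l => FreeGroup.freeGroupUnitEquivInt l.2).prod := by
  let L := w.toList.map fun l =>
    (l.1, (↑(letterUnit l.1 ^ FreeGroup.freeGroupUnitEquivInt l.2) : NCSeries σ))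
  have hprod : (magnusCoprodI w.prod : NCSeries σ) = (L.map Prod.snd).prod := by
    rw [Monoid.CoprodI.Word.prod, map_list_prod, ← Units.coeHom_apply, map_list_prod]
    simp [L, Function.comp_def, magnusCoprodI_of]
  have hL : L.IsChain (·.1 ≠ ·.1) := (List.isChain_map _).2 w.chain_ne
  have hf : ∀ p ∈ L, IsSeriesIn p.1 p.2 ∧ p.2 [] = 1 := by
    simp only [L, List.mem_map]
    rintro _ ⟨l, -, rfl⟩
    exact ⟨(letterUnit_zpow_spec _ _).1, (letterUnit_zpow_spec _ _).2.1⟩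
  have hfst : w.toList.map Sigma.fst = L.map Prod.fst := by simp [L]
  rw [hprod, hfst, prod_apply_map_fst hL hf]
  simp only [L, List.map_map]
  congr 1
  exact List.map_congr_left fun l _ => (letterUnit_zpow_spec _ _).2.2

theorem magnusCoprodI_injective : Function.Injective (magnusCoprodI (σ := σ)) := by
  refine (injective_iff_map_eq_one _).2 fun y hy => ?_
  obtain ⟨w, rfl⟩ : ∃ w : Monoid.CoprodI.Word (fun _ : σ => FreeGroup Unit), w.prod = y :=
    ⟨Monoid.CoprodI.Word.equiv y, Monoid.CoprodI.Word.equiv.symm_apply_apply y⟩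
  suffices hnil : w.toList = [] by
    rw [show w = Monoid.CoprodI.Word.empty from Monoid.CoprodI.Word.ext hnil]
    rfl
  by_contra hne
  obtain ⟨l, t, ht⟩ := List.exists_cons_of_ne_nil hne
  have hcoeff := coe_magnusCoprodI_prod_apply w
  rw [hy, ht, List.map_cons, Units.val_one, one_apply_cons, ← ht] at hcoeff
  refine List.prod_ne_zero ?_ hcoeff.symm
  simp only [List.mem_map, not_exists, not_and]
  intro l hl h0
  exact w.ne_one l hl (FreeGroup.freeGroupUnitEquivInt.injective h0)

theorem magnusHom_injective : Function.Injective (magnusHom (σ := σ)) := by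
  have hfactor :
      magnusHom = magnusCoprodI.comp (freeGroupEquivCoprodI (ι := σ)).toMonoidHom := by
    ext i; simp [magnusHom, magnusCoprodI]
  rw [hfactor, MonoidHom.coe_comp]
  exact magnusCoprodI_injective.comp freeGroupEquivCoprodI.injective

end NCSeries

theorem stmt3 (n : ℕ) :
    magnus (1 : FreeGroup (Fin n)) = 1 ∧
    (∀ x y : FreeGroup (Fin n), magnus (x * y) = magnus x * magnus y) ∧
    Function.Injective (magnus : FreeGroup (Fin n) → NCSeries (Fin n)) ∧
    (∀ x : FreeGroup (Fin n), ∃ u : NCSeries (Fin n),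
      magnus x * u = 1 ∧ u * magnus x = 1) := by
  have hmagnus : (magnus : FreeGroup (Fin n) → NCSeries (Fin n)) = (↑) ∘ NCSeries.magnusHom :=
    funext fun x => (NCSeries.coe_magnusHom x).symm
  simp only [hmagnus, Function.comp_apply]
  refine ⟨by rw [map_one, Units.val_one], fun x y => by rw [map_mul, Units.val_mul],
    Units.val_injective.comp NCSeries.magnusHom_injective,
    fun x => ⟨↑(NCSeries.magnusHom x)⁻¹, Units.mul_inv _, Units.inv_mul _⟩⟩
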